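/- Let R: ℝⁿ → ℝ be convex and twice continuously differentiable near x₀ with Φx₀ = y₀ and ∇R(x₀) ∈ Im Φ*. Then x₀ is a strong minimizer of R subject to Φx = y₀ (quadratic growth on the feasible set near x₀) if and only if Ker Φ ∩ Ker ∇²R(x₀) = {0}. -/

import Mathlib

/-!
Convexity yields the gradient inequality, hence a symmetric positive semidefinite Hessian `H`
and the two-sided bounds `⟪∇R x₀, h⟫ + ⟪H h, h⟫ / 4 - o(‖h‖²) ≤ R (x₀ + h) - R x₀ ≤
⟪∇R x₀, h⟫ + ⟪H h, h⟫ + o(‖h‖²)`. The feasible set is `x₀ + ker Φ`, on which `∇R x₀ ∈ range Φ*`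
kills the linear term. A nonzero `w ∈ ker Φ ∩ ker H` therefore gives `o(t²)` growth along
`x₀ + t w`, so `x₀` is not a strong minimizer. Conversely, if `ker Φ ∩ ker H = 0`, positivity of
`H` makes `⟪H h, h⟫` positive on the unit sphere of `ker Φ`, so by compactness
`⟪H h, h⟫ ≥ μ ‖h‖²` there, and the lower bound gives quadratic growth.
-/

open RealInnerProductSpace Filter Topology

def IsStrongMinOn {E : Type*} [NormedAddCommGroup E] (R : E → ℝ) (s : Set E) (x₀ : E) : Prop :=
  ∃ κ δ : ℝ, 0 < κ ∧ 0 < δ ∧ ∀ x ∈ s, ‖x - x₀‖ ≤ δ → κ / 2 * ‖x - x₀‖ ^ 2 ≤ R x - R x₀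

variable {E : Type*} [NormedAddCommGroup E] [InnerProductSpace ℝ E]

theorem HasFDerivAt.eventually_abs_inner_sub_le {f : E → E} {f' : E →L[ℝ] E} {x₀ : E}
    (hf : HasFDerivAt f f' x₀) {ε : ℝ} (hε : 0 < ε) :
    ∀ᶠ x in 𝓝 x₀, |⟪f x - f x₀ - f' (x - x₀), x - x₀⟫| ≤ ε * ‖x - x₀‖ ^ 2 := by
  filter_upwards [hf.isLittleO.def hε] with x hx
  calc |⟪f x - f x₀ - f' (x - x₀), x - x₀⟫| ≤ ‖f x - f x₀ - f' (x - x₀)‖ * ‖x - x₀‖ :=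
        abs_real_inner_le_norm _ _
    _ ≤ ε * ‖x - x₀‖ * ‖x - x₀‖ := by gcongr
    _ = ε * ‖x - x₀‖ ^ 2 := by ring

theorem ContinuousLinearMap.IsPositive.apply_eq_zero_of_inner_apply_self_eq_zero
    {T : E →L[ℝ] E} (hT : T.IsPositive) {w : E} (hw : ⟪T w, w⟫ = 0) : T w = 0 := by
  have hquad : ∀ t : ℝ, 0 ≤ ⟪T (T w), T w⟫ * (t * t) + (-2 * ⟪T w, T w⟫) * t + 0 := by
    intro t
    have := hT.inner_nonneg_left (w - t • T w)
    have hsymm : ⟪T (T w), w⟫ = ⟪T w, T w⟫ := hT.isSymmetric (T w) w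
    simp only [map_sub, map_smul, inner_sub_left, inner_sub_right, real_inner_smul_left,
      real_inner_smul_right, hw, hsymm] at this
    linarith
  have hdisc := discrim_le_zero hquad
  rw [discrim] at hdisc
  have hsq : ⟪T w, T w⟫ ^ 2 ≤ 0 := by linarith
  exact inner_self_eq_zero.mp (pow_eq_zero_iff two_ne_zero |>.mp (hsq.antisymm (sq_nonneg _)))

theorem exists_pos_mul_norm_sq_le_inner_apply_self {F : Type*} [NormedAddCommGroup F]
    [NormedSpace ℝ F] [FiniteDimensional ℝ E] (Φ : E →L[ℝ] F) (T : E →L[ℝ] E)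
    (hT : ∀ w, Φ w = 0 → w ≠ 0 → 0 < ⟪T w, w⟫) :
    ∃ μ > 0, ∀ w, Φ w = 0 → μ * ‖w‖ ^ 2 ≤ ⟪T w, w⟫ := by
  set S := {w | Φ w = 0} ∩ Metric.sphere (0 : E) 1
  have hS : IsCompact S :=
    (isCompact_sphere 0 1).inter_left (isClosed_eq Φ.continuous continuous_const)
  obtain ⟨μ, hμ, hμS⟩ := hS.exists_forall_le' (T.continuous.inner continuous_id).continuousOn
    (a := 0) fun w hw => hT w hw.1 (ne_zero_of_mem_unit_sphere ⟨w, hw.2⟩)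
  refine ⟨μ, hμ, fun w hw => ?_⟩
  rcases eq_or_ne w 0 with rfl | hw0
  · simp
  have hnorm : ‖w‖ ≠ 0 := norm_ne_zero_iff.mpr hw0
  have hu : ‖w‖⁻¹ • w ∈ S :=
    ⟨by simp [hw], by simp [norm_smul, hnorm]⟩
  have := hμS _ hu
  simp only [id, map_smul, real_inner_smul_left, real_inner_smul_right] at this
  calc μ * ‖w‖ ^ 2 ≤ ‖w‖⁻¹ * (‖w‖⁻¹ * ⟪T w, w⟫) * ‖w‖ ^ 2 := by gcongr
    _ = ⟪T w, w⟫ := by field_simp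

section Gradient

variable [CompleteSpace E] {R : E → ℝ} {gr : E → E} {H : E →L[ℝ] E} {x₀ : E}

theorem ConvexOn.add_inner_le_of_hasGradientAt (hconv : ConvexOn ℝ Set.univ R) {z g : E}
    (hg : HasGradientAt R g z) (x : E) : R z + ⟪g, x - z⟫ ≤ R x := by
  set ℓ : ℝ →ᵃ[ℝ] E := AffineMap.lineMap z x
  have hline : HasDerivAt (R ∘ ℓ) ⟪g, x - z⟫ 0 := by
    have hg' : HasFDerivAt R (InnerProductSpace.toDual ℝ E g) (ℓ 0) := by
      simpa [ℓ] using hasGradientAt_iff_hasFDerivAt.mp hg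
    simpa using hg'.comp_hasDerivAt (0 : ℝ) AffineMap.hasDerivAt_lineMap
  have := (hconv.comp_affineMap ℓ).le_slope_of_hasDerivAt
    (Set.mem_univ 0) (Set.mem_univ 1) zero_lt_one hline
  simp only [slope_def_field, Function.comp_apply, ℓ, AffineMap.lineMap_apply_zero,
    AffineMap.lineMap_apply_one, sub_zero, div_one] at this
  linarith

theorem ConvexOn.inner_sub_nonneg_of_hasGradientAt (hconv : ConvexOn ℝ Set.univ R) {x y gx gy : E}
    (hx : HasGradientAt R gx x) (hy : HasGradientAt R gy y) : 0 ≤ ⟪gx - gy, x - y⟫ := by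
  have h₁ := hconv.add_inner_le_of_hasGradientAt hx y
  have h₂ := hconv.add_inner_le_of_hasGradientAt hy x
  rw [← neg_sub x y, inner_neg_right] at h₁
  rw [inner_sub_left]
  linarith

theorem ConvexOn.inner_apply_self_nonneg_of_hasFDerivAt_gradient (hconv : ConvexOn ℝ Set.univ R)
    (hgr : ∀ᶠ x in 𝓝 x₀, HasGradientAt R (gr x) x) (hH : HasFDerivAt gr H x₀) (w : E) :
    0 ≤ ⟪H w, w⟫ := by
  have hderiv : HasFDerivAt (fun x => ⟪w, gr x⟫) ((innerSL ℝ w).comp H) x₀ :=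
    (innerSL ℝ w).hasFDerivAt.comp x₀ hH
  have hmin : IsLocalMinOn (fun x => ⟪w, gr x⟫) (segment ℝ x₀ (x₀ + w)) x₀ := by
    filter_upwards [nhdsWithin_le_nhds hgr, self_mem_nhdsWithin] with x hx hxs
    rw [segment_eq_image', add_sub_cancel_left] at hxs
    obtain ⟨t, ⟨ht, -⟩, rfl⟩ := hxs
    have hmono := hconv.inner_sub_nonneg_of_hasGradientAt hx hgr.self_of_nhds
    rw [add_sub_cancel_left, real_inner_smul_right, real_inner_comm, inner_sub_right] at hmono
    rcases ht.eq_or_lt with rfl | ht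
    · simp
    · linarith [nonneg_of_mul_nonneg_right hmono ht]
  simpa [real_inner_comm] using hmin.hasFDerivWithinAt_nonneg hderiv.hasFDerivWithinAt
    (mem_posTangentConeAt_of_segment_subset subset_rfl)

theorem isSymmetric_of_hasFDerivAt_gradient (hgr : ∀ᶠ x in 𝓝 x₀, HasGradientAt R (gr x) x)
    (hH : HasFDerivAt gr H x₀) : H.IsSymmetric := by
  let J := (InnerProductSpace.toDual ℝ E).toContinuousLinearEquiv.toContinuousLinearMap
  have hR : ∀ᶠ x in 𝓝 x₀, HasFDerivAt R (J (gr x)) x := by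
    filter_upwards [hgr] with x hx using hasGradientAt_iff_hasFDerivAt.mp hx
  intro v w
  have := second_derivative_symmetric_of_eventually hR (J.hasFDerivAt.comp x₀ hH) v w
  simpa [J, real_inner_comm] using this

theorem ConvexOn.isPositive_of_hasFDerivAt_gradient (hconv : ConvexOn ℝ Set.univ R)
    (hgr : ∀ᶠ x in 𝓝 x₀, HasGradientAt R (gr x) x) (hH : HasFDerivAt gr H x₀) : H.IsPositive :=
  ⟨isSymmetric_of_hasFDerivAt_gradient hgr hH, fun w => by
    simpa [ContinuousLinearMap.reApplyInnerSelf_apply] using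
      hconv.inner_apply_self_nonneg_of_hasFDerivAt_gradient hgr hH w⟩

theorem ConvexOn.eventually_sub_le_of_hasFDerivAt_gradient (hconv : ConvexOn ℝ Set.univ R)
    (hgr : ∀ᶠ x in 𝓝 x₀, HasGradientAt R (gr x) x) (hH : HasFDerivAt gr H x₀) {ε : ℝ}
    (hε : 0 < ε) : ∀ᶠ x in 𝓝 x₀,
      R x - R x₀ ≤ ⟪gr x₀, x - x₀⟫ + ⟪H (x - x₀), x - x₀⟫ + ε * ‖x - x₀‖ ^ 2 := by
  filter_upwards [hgr, hH.eventually_abs_inner_sub_le hε] with x hx herr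
  have h := hconv.add_inner_le_of_hasGradientAt hx x₀
  rw [← neg_sub x x₀, inner_neg_right] at h
  have hsplit : ⟪gr x, x - x₀⟫ = ⟪gr x₀, x - x₀⟫ + ⟪H (x - x₀), x - x₀⟫
      + ⟪gr x - gr x₀ - H (x - x₀), x - x₀⟫ := by
    simp only [inner_sub_left]; ring
  linarith [(abs_le.mp herr).2]

-- The gradient inequality at `x₀` and at the midpoint `z` of `[x₀, x]` together give
-- `R x - R x₀ ≥ ⟪gr x₀, x - x₀⟫ + ⟪gr z - gr x₀, z - x₀⟫`, and `gr z - gr x₀ ≈ H (z - x₀)`.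
theorem ConvexOn.eventually_le_sub_of_hasFDerivAt_gradient (hconv : ConvexOn ℝ Set.univ R)
    (hgr : ∀ᶠ x in 𝓝 x₀, HasGradientAt R (gr x) x) (hH : HasFDerivAt gr H x₀) {ε : ℝ}
    (hε : 0 < ε) : ∀ᶠ x in 𝓝 x₀,
      ⟪gr x₀, x - x₀⟫ + ⟪H (x - x₀), x - x₀⟫ / 4 - ε * ‖x - x₀‖ ^ 2 ≤ R x - R x₀ := by
  let mid : E → E := fun x => x₀ + (2⁻¹ : ℝ) • (x - x₀)
  have hmid : Tendsto mid (𝓝 x₀) (𝓝 x₀) :=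
    (continuous_const.add (continuous_const.smul (continuous_id.sub continuous_const))).tendsto'
      x₀ x₀ (by simp)
  filter_upwards [hmid.eventually hgr,
    hmid.eventually (hH.eventually_abs_inner_sub_le (mul_pos four_pos hε))] with x hz herr
  have h₁ := hconv.add_inner_le_of_hasGradientAt hz x
  have h₂ := hconv.add_inner_le_of_hasGradientAt hgr.self_of_nhds (mid x)
  have hz₁ : mid x - x₀ = (2⁻¹ : ℝ) • (x - x₀) := by simp [mid]
  have hz₂ : x - mid x = (2⁻¹ : ℝ) • (x - x₀) := by simp only [mid]; module
  rw [hz₁] at h₂ herr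
  rw [hz₂] at h₁
  simp only [map_smul, inner_sub_left, real_inner_smul_left, real_inner_smul_right, norm_smul,
    Real.norm_eq_abs, abs_inv, abs_two] at h₁ h₂ herr
  nlinarith [(abs_le.mp herr).1]

section Constrained

variable {F : Type*} [NormedAddCommGroup F] [NormedSpace ℝ F] {Φ : E →L[ℝ] F}

theorem ConvexOn.eq_zero_of_isStrongMinOn (hconv : ConvexOn ℝ Set.univ R)
    (hgr : ∀ᶠ x in 𝓝 x₀, HasGradientAt R (gr x) x) (hH : HasFDerivAt gr H x₀)
    (horth : ∀ w, Φ w = 0 → ⟪gr x₀, w⟫ = 0) (hmin : IsStrongMinOn R {x | Φ x = Φ x₀} x₀)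
    {w : E} (hΦw : Φ w = 0) (hHw : H w = 0) : w = 0 := by
  obtain ⟨κ, δ, hκ, hδ, hgrowth⟩ := hmin
  have hray : Tendsto (fun t : ℝ => x₀ + t • w) (𝓝[>] 0) (𝓝 x₀) :=
    ((continuous_const.add (continuous_id.smul continuous_const)).tendsto' 0 x₀
      (by simp)).mono_left nhdsWithin_le_nhds
  obtain ⟨t, hup, hball, ht⟩ :=
    ((hray.eventually (hconv.eventually_sub_le_of_hasFDerivAt_gradient hgr hH
      (div_pos hκ four_pos))).and ((hray.eventually (Metric.closedBall_mem_nhds x₀ hδ)).and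
      self_mem_nhdsWithin)).exists
  have hlow := hgrowth (x₀ + t • w) (by simp [hΦw]) (by simpa [dist_eq_norm] using hball)
  simp only [add_sub_cancel_left, map_smul, hHw, smul_zero, inner_zero_left, add_zero,
    real_inner_smul_right, horth w hΦw, mul_zero, zero_add] at hup hlow
  have hzero : t • w = 0 := by
    by_contra hne
    linarith [mul_pos (div_pos hκ four_pos) (pow_pos (norm_pos_iff.mpr hne) 2)]
  exact (smul_eq_zero.mp hzero).resolve_left ht.ne'

theorem ConvexOn.isStrongMinOn_of_ker_inf_ker_trivial [FiniteDimensional ℝ E]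
    (hconv : ConvexOn ℝ Set.univ R) (hgr : ∀ᶠ x in 𝓝 x₀, HasGradientAt R (gr x) x)
    (hH : HasFDerivAt gr H x₀) (horth : ∀ w, Φ w = 0 → ⟪gr x₀, w⟫ = 0)
    (hker : ∀ w, Φ w = 0 → H w = 0 → w = 0) : IsStrongMinOn R {x | Φ x = Φ x₀} x₀ := by
  have hpos := hconv.isPositive_of_hasFDerivAt_gradient hgr hH
  obtain ⟨μ, hμ, hcoer⟩ := exists_pos_mul_norm_sq_le_inner_apply_self Φ H fun w hΦw hw0 =>
    (hpos.inner_nonneg_left w).lt_of_ne' fun h =>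
      hw0 (hker w hΦw (hpos.apply_eq_zero_of_inner_apply_self_eq_zero h))
  obtain ⟨r, hr, hlow⟩ := Metric.eventually_nhds_iff.mp
    (hconv.eventually_le_sub_of_hasFDerivAt_gradient hgr hH (ε := μ / 8) (by positivity))
  refine ⟨μ / 4, r / 2, by positivity, by positivity, fun x hx hxr => ?_⟩
  have hΦ : Φ (x - x₀) = 0 := by simp [show Φ x = Φ x₀ from hx]
  have := hlow (show dist x x₀ < r by rw [dist_eq_norm]; linarith)
  rw [horth _ hΦ] at this
  linarith [hcoer _ hΦ]

end Constrained

end Gradient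

theorem stmt10_general (n m : ℕ) (R : EuclideanSpace ℝ (Fin n) → ℝ)
    (hconv : ConvexOn ℝ Set.univ R)
    (Φ : EuclideanSpace ℝ (Fin n) →L[ℝ] EuclideanSpace ℝ (Fin m))
    (x₀ : EuclideanSpace ℝ (Fin n)) (y₀ : EuclideanSpace ℝ (Fin m))
    (hy₀ : Φ x₀ = y₀)
    (U : Set (EuclideanSpace ℝ (Fin n))) (hU : U ∈ nhds x₀)
    (gr : EuclideanSpace ℝ (Fin n) → EuclideanSpace ℝ (Fin n))
    (hgr : ∀ x ∈ U, HasGradientAt R (gr x) x)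
    (H : EuclideanSpace ℝ (Fin n) →L[ℝ] EuclideanSpace ℝ (Fin n))
    (hH : HasFDerivAt gr H x₀)
    (hsrc : gr x₀ ∈ Set.range (ContinuousLinearMap.adjoint Φ)) :
    (∃ κ δ : ℝ, 0 < κ ∧ 0 < δ ∧
        ∀ x, Φ x = y₀ → ‖x - x₀‖ ≤ δ → κ / 2 * ‖x - x₀‖ ^ 2 ≤ R x - R x₀)
      ↔ (∀ w : EuclideanSpace ℝ (Fin n), Φ w = 0 → H w = 0 → w = 0) := by
  subst hy₀
  have hgr' : ∀ᶠ x in 𝓝 x₀, HasGradientAt R (gr x) x := eventually_of_mem hU hgr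
  obtain ⟨ν, hν⟩ := hsrc
  have horth : ∀ w, Φ w = 0 → ⟪gr x₀, w⟫ = 0 := fun w hw => by
    rw [← hν, ContinuousLinearMap.adjoint_inner_left, hw, inner_zero_right]
  exact ⟨fun hmin w => hconv.eq_zero_of_isStrongMinOn hgr' hH horth hmin,
    hconv.isStrongMinOn_of_ker_inf_ker_trivial hgr' hH horth⟩

theorem stmt10 (n m : ℕ) (R : EuclideanSpace ℝ (Fin n) → ℝ)
    (hconv : ConvexOn ℝ Set.univ R)
    (Φ : EuclideanSpace ℝ (Fin n) →L[ℝ] EuclideanSpace ℝ (Fin m))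
    (x₀ : EuclideanSpace ℝ (Fin n)) (y₀ : EuclideanSpace ℝ (Fin m))
    (hy₀ : Φ x₀ = y₀)
    (U : Set (EuclideanSpace ℝ (Fin n))) (hU : U ∈ nhds x₀)
    (gr : EuclideanSpace ℝ (Fin n) → EuclideanSpace ℝ (Fin n))
    (hgr : ∀ x ∈ U, HasGradientAt R (gr x) x)
    (hgrc : ContinuousOn gr U)
    (H : EuclideanSpace ℝ (Fin n) →L[ℝ] EuclideanSpace ℝ (Fin n))
    (hH : HasFDerivAt gr H x₀)
    (hsrc : gr x₀ ∈ Set.range (ContinuousLinearMap.adjoint Φ)) :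
    (∃ κ δ : ℝ, 0 < κ ∧ 0 < δ ∧
        ∀ x, Φ x = y₀ → ‖x - x₀‖ ≤ δ → κ / 2 * ‖x - x₀‖ ^ 2 ≤ R x - R x₀)
      ↔ (∀ w : EuclideanSpace ℝ (Fin n), Φ w = 0 → H w = 0 → w = 0) :=
  stmt10_general n m R hconv Φ x₀ y₀ hy₀ U hU gr hgr H hH hsrc
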